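/- Simplex enclosing: Let 1 ≤ m ≤ d and let v : Fin (m+1) → EuclideanSpace ℝ (Fin d) be affinely independent (an m-simplex), with barycentric circumradius β = max over i of dist κ (v i) where κ = (1/(m+1)) • ∑ i, v i, and diameter D = max over pairs i, j of dist (v i) (v j). Then there exist a center c and a radius r such that the convex hull of the vertices is contained in the closed ball centered at c of radius r, and r ≤ min (β, sqrt(m / (2*m + 2)) * D). -/

import Mathlib

open Finset Filter Topology
open scoped RealInnerProductSpace

/-!
Jung-type bound via the weighted variance `f w = ∑ wᵢ ‖vᵢ‖² - ‖∑ wᵢ vᵢ‖²` of the vertices.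
Take weights `w` maximizing `f` on the standard simplex and let `c = ∑ wᵢ vᵢ`. Moving
`w` towards a vertex `vⱼ` changes `f` to `(1 - t) f w + t (1 - t) ‖vⱼ - c‖²`, so maximality
gives `‖vⱼ - c‖² ≤ f w`. On the other hand `2 f w = ∑ᵢⱼ wᵢ wⱼ ‖vᵢ - vⱼ‖² ≤ (1 - ∑ wᵢ²) D²`,
and `∑ wᵢ² ≥ 1 / (m + 1)` by Cauchy–Schwarz, giving radius `√(m / (2m + 2)) D` about `c`.
The ball about `κ` of radius `β` is the other candidate.
-/

section WeightedVariance

variable {ι E : Type*} [Fintype ι] [NormedAddCommGroup E] [InnerProductSpace ℝ E]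

noncomputable def weightedVariance (v : ι → E) (w : ι → ℝ) : ℝ :=
  ∑ i, w i * ‖v i‖ ^ 2 - ‖∑ i, w i • v i‖ ^ 2

theorem continuous_weightedVariance (v : ι → E) : Continuous (weightedVariance v) := by
  unfold weightedVariance
  fun_prop

theorem weightedVariance_convexCombination (v : ι → E) (w w' : ι → ℝ) (t : ℝ) :
    weightedVariance v ((1 - t) • w + t • w') =
      (1 - t) * weightedVariance v w + t * weightedVariance v w' +
        t * (1 - t) * ‖∑ i, w i • v i - ∑ i, w' i • v i‖ ^ 2 := by
  simp only [weightedVariance, Pi.add_apply, Pi.smul_apply, smul_eq_mul, add_mul, add_smul,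
    mul_smul, sum_add_distrib, ← smul_sum, mul_assoc, ← mul_sum]
  set a := ∑ i, w i • v i
  set b := ∑ i, w' i • v i
  rw [norm_add_sq_real, norm_sub_sq_real, norm_smul, norm_smul, real_inner_smul_left,
    real_inner_smul_right, mul_pow, mul_pow, Real.norm_eq_abs, Real.norm_eq_abs, sq_abs, sq_abs]
  ring

theorem weightedVariance_single [DecidableEq ι] (v : ι → E) (j : ι) :
    weightedVariance v (Pi.single j 1) = 0 := by
  simp [weightedVariance, Pi.single_apply, ite_smul]

theorem two_mul_weightedVariance {w : ι → ℝ} (v : ι → E) (hw : ∑ i, w i = 1) :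
    2 * weightedVariance v w = ∑ i, ∑ j, w i * w j * dist (v i) (v j) ^ 2 := by
  have hcenter : ‖∑ i, w i • v i‖ ^ 2 = ∑ i, ∑ j, w i * w j * ⟪v i, v j⟫ := by
    simp only [← real_inner_self_eq_norm_sq, sum_inner, inner_sum, real_inner_smul_left,
      real_inner_smul_right, mul_assoc]
    exact sum_congr rfl fun _ _ => sum_congr rfl fun _ _ => by rw [real_inner_comm]
  have hmarginal : ∀ f : ι → ℝ, ∑ i, ∑ j, w i * w j * f i = ∑ i, w i * f i := fun f => by
    simp [mul_comm, mul_left_comm, ← mul_sum, ← sum_mul, hw]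
  simp only [dist_eq_norm, norm_sub_sq_real, mul_sub, mul_add, sum_sub_distrib, sum_add_distrib]
  rw [sum_comm (f := fun i j => w i * w j * ‖v j‖ ^ 2)]
  simp only [mul_comm (w _) (w _), hmarginal, mul_left_comm _ (2 : ℝ), ← mul_sum,
    weightedVariance, hcenter]
  ring

theorem dist_sq_le_weightedVariance_of_isMaxOn {w : ι → ℝ} (v : ι → E)
    (hw : w ∈ stdSimplex ℝ ι) (hmax : IsMaxOn (weightedVariance v) (stdSimplex ℝ ι) w) (j : ι) :
    dist (v j) (∑ i, w i • v i) ^ 2 ≤ weightedVariance v w := by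
  classical
  set B := dist (v j) (∑ i, w i • v i) ^ 2
  have hv_single : ∑ i, (Pi.single j (1 : ℝ) : ι → ℝ) i • v i = v j := by
    simp [Pi.single_apply, ite_smul]
  have hstep : ∀ t ∈ Set.Ioc (0 : ℝ) 1, (1 - t) * B ≤ weightedVariance v w := by
    rintro t ⟨ht0, ht1⟩
    have hmem : (1 - t) • w + t • Pi.single j 1 ∈ stdSimplex ℝ ι :=
      convex_stdSimplex ℝ ι hw (single_mem_stdSimplex ℝ j) (by linarith) ht0.le (by ring)
    have hle : weightedVariance v _ ≤ _ := hmax hmem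
    rw [weightedVariance_convexCombination, weightedVariance_single,
      hv_single, ← dist_eq_norm, dist_comm] at hle
    nlinarith
  have hlim : Tendsto (fun t : ℝ => (1 - t) * B) (𝓝[>] 0) (𝓝 B) := by
    apply tendsto_nhdsWithin_of_tendsto_nhds
    simpa using ((continuous_const.sub continuous_id).mul continuous_const).tendsto (0 : ℝ)
      (f := fun t : ℝ => (1 - t) * B)
  exact le_of_tendsto hlim (eventually_of_mem (Ioc_mem_nhdsGT one_pos) hstep)

end WeightedVariance

section PairwiseDistance

variable {ι α : Type*} [Fintype ι] [PseudoMetricSpace α]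

theorem sum_sum_mul_dist_sq_le {w : ι → ℝ} {v : ι → α} {D : ℝ} (hw : w ∈ stdSimplex ℝ ι)
    (hD : ∀ i j, dist (v i) (v j) ≤ D) :
    ∑ i, ∑ j, w i * w j * dist (v i) (v j) ^ 2 ≤ (1 - ∑ i, w i ^ 2) * D ^ 2 := by
  classical
  have hterm : ∀ i j, w i * w j * dist (v i) (v j) ^ 2 ≤
      w i * w j * D ^ 2 - if j = i then w i ^ 2 * D ^ 2 else 0 := by
    intro i j
    split_ifs with h
    · subst h
      exact le_of_eq (by rw [dist_self]; ring)
    · have := pow_le_pow_left₀ dist_nonneg (hD i j) 2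
      simpa using mul_le_mul_of_nonneg_left this (mul_nonneg (hw.1 i) (hw.1 j))
  calc _ ≤ ∑ i, ∑ j, (w i * w j * D ^ 2 - if j = i then w i ^ 2 * D ^ 2 else 0) :=
        sum_le_sum fun i _ => sum_le_sum fun j _ => hterm i j
    _ = (1 - ∑ i, w i ^ 2) * D ^ 2 := by
        simp only [sum_sub_distrib, sum_ite_eq', mem_univ, if_true, ← sum_mul, ← mul_sum, hw.2]
        ring

end PairwiseDistance

theorem one_div_card_le_sum_sq {ι : Type*} [Fintype ι] {w : ι → ℝ} (hw : ∑ i, w i = 1) :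
    1 / Fintype.card ι ≤ ∑ i, w i ^ 2 := by
  have hcard : (0 : ℝ) < Fintype.card ι := by
    obtain ⟨i, -, -⟩ := exists_ne_zero_of_sum_ne_zero (hw ▸ one_ne_zero : ∑ i, w i ≠ 0)
    exact Nat.cast_pos.2 (Fintype.card_pos_iff.2 ⟨i⟩)
  have := sq_sum_le_card_mul_sum_sq (s := univ) (f := w)
  rw [hw, card_univ] at this
  rw [div_le_iff₀ hcard]
  linarith

section Jung

variable {ι E : Type*} [Fintype ι] [Nonempty ι] [NormedAddCommGroup E] [InnerProductSpace ℝ E]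

theorem exists_forall_dist_le_sqrt_mul_of_pairwise_dist_le {v : ι → E} {D : ℝ}
    (hD : ∀ i j, dist (v i) (v j) ≤ D) :
    ∃ c, ∀ i, dist (v i) c ≤ √((1 - 1 / Fintype.card ι) / 2) * D := by
  classical
  obtain ⟨w, hw, hmax⟩ := (isCompact_stdSimplex ℝ ι).exists_isMaxOn
    ⟨_, single_mem_stdSimplex ℝ (Classical.arbitrary ι)⟩
    (continuous_weightedVariance v).continuousOn
  refine ⟨∑ i, w i • v i, fun j => ?_⟩
  have hD0 : 0 ≤ D := dist_nonneg.trans (hD j j)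
  rw [← Real.sqrt_sq hD0, ← Real.sqrt_mul' _ (sq_nonneg D)]
  refine Real.le_sqrt_of_sq_le ?_
  calc dist (v j) (∑ i, w i • v i) ^ 2 ≤ weightedVariance v w :=
        dist_sq_le_weightedVariance_of_isMaxOn v hw hmax j
    _ = (∑ i, ∑ j, w i * w j * dist (v i) (v j) ^ 2) / 2 := by
        rw [← two_mul_weightedVariance v hw.2]; ring
    _ ≤ (1 - ∑ i, w i ^ 2) * D ^ 2 / 2 := by gcongr; exact sum_sum_mul_dist_sq_le hw hD
    _ ≤ (1 - 1 / Fintype.card ι) / 2 * D ^ 2 := by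
        have := one_div_card_le_sum_sq hw.2
        rw [div_mul_eq_mul_div]
        gcongr

end Jung

theorem exists_convexHull_range_subset_closedBall_min {ι E : Type*} [SeminormedAddCommGroup E]
    [NormedSpace ℝ E] {v : ι → E} {c₁ c₂ : E} {r₁ r₂ : ℝ}
    (h₁ : ∀ i, dist (v i) c₁ ≤ r₁) (h₂ : ∀ i, dist (v i) c₂ ≤ r₂) :
    ∃ c, convexHull ℝ (Set.range v) ⊆ Metric.closedBall c (min r₁ r₂) := by
  rcases min_choice r₁ r₂ with h | h <;> rw [h]
  · exact ⟨c₁, convexHull_min (Set.range_subset_iff.2 h₁) (convex_closedBall c₁ r₁)⟩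
  · exact ⟨c₂, convexHull_min (Set.range_subset_iff.2 h₂) (convex_closedBall c₂ r₂)⟩

theorem simplex_enclosing_general (d m : ℕ)
    (v : Fin (m + 1) → EuclideanSpace ℝ (Fin d))
    (κ : EuclideanSpace ℝ (Fin d))
    (β : ℝ)
    (hβ : β = Finset.univ.sup' Finset.univ_nonempty
      (fun i : Fin (m + 1) => dist κ (v i)))
    (D : ℝ)
    (hD : D = Finset.univ.sup' Finset.univ_nonempty
      (fun p : Fin (m + 1) × Fin (m + 1) => dist (v p.1) (v p.2))) :
    ∃ (c : EuclideanSpace ℝ (Fin d)) (r : ℝ),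
      convexHull ℝ (Set.range v) ⊆ Metric.closedBall c r ∧
      r ≤ min β (Real.sqrt ((m : ℝ) / (2 * (m : ℝ) + 2)) * D) := by
  have hvertex : ∀ i, dist (v i) κ ≤ β := fun i => by
    rw [hβ, dist_comm]
    exact le_sup' (fun i => dist κ (v i)) (mem_univ i)
  have hedge : ∀ i j, dist (v i) (v j) ≤ D := fun i j => by
    rw [hD]
    exact le_sup' (fun p : Fin (m + 1) × Fin (m + 1) => dist (v p.1) (v p.2)) (mem_univ (i, j))
  obtain ⟨c, hc⟩ := exists_forall_dist_le_sqrt_mul_of_pairwise_dist_le hedge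
  have hcard : (1 - 1 / Fintype.card (Fin (m + 1)) : ℝ) / 2 = m / (2 * m + 2) := by
    rw [Fintype.card_fin]
    push_cast
    field_simp
    ring
  rw [hcard] at hc
  obtain ⟨c', hc'⟩ := exists_convexHull_range_subset_closedBall_min hvertex hc
  exact ⟨c', _, hc', le_rfl⟩

/-- **Simplex enclosing.** An `m`-simplex with barycentric circumradius `β` and
diameter `D` is enclosable by a closed ball of radius
`r ≤ min β (sqrt (m/(2m+2)) · D)`. -/
theorem simplex_enclosing (d m : ℕ) (hm : 1 ≤ m) (hmd : m ≤ d)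
    (v : Fin (m + 1) → EuclideanSpace ℝ (Fin d))
    (hai : AffineIndependent ℝ v)
    (κ : EuclideanSpace ℝ (Fin d))
    (hκ : κ = (1 / ((m : ℝ) + 1)) • ∑ i, v i)
    (β : ℝ)
    (hβ : β = Finset.univ.sup' Finset.univ_nonempty
      (fun i : Fin (m + 1) => dist κ (v i)))
    (D : ℝ)
    (hD : D = Finset.univ.sup' Finset.univ_nonempty
      (fun p : Fin (m + 1) × Fin (m + 1) => dist (v p.1) (v p.2))) :
    ∃ (c : EuclideanSpace ℝ (Fin d)) (r : ℝ),
      convexHull ℝ (Set.range v) ⊆ Metric.closedBall c r ∧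
      r ≤ min β (Real.sqrt ((m : ℝ) / (2 * (m : ℝ) + 2)) * D) :=
  simplex_enclosing_general d m v κ β hβ D hD
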